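/- Let d ≥ 2 and let λ₀ be a parameter with [λ₀] ∉ E. Then there exists C > 0 such that for every t ∈ ℂ, every z with |z| = 1, and every c ∈ ℂ with q'_{tλ₀,z}(c) = 0, one has (1/C)·|t|^d ≤ |q_{tλ₀,z}(c)| ≤ C·|t|^d. -/

import Mathlib

noncomputable section

/-- The parameter space `ℂ^{D_d}` with the Euclidean norm, indexed by the pairs
`(j,k)` with `0 ≤ j ≤ d-2` and `0 ≤ k ≤ d-j` (so of dimension `D_d = (d-1)(d+4)/2`). -/
abbrev Param (d : ℕ) := EuclideanSpace ℂ (Σ j : Fin (d - 1), Fin (d - (j : ℕ) + 1))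

/-- The fiber polynomial `q_{λ,z}(w) = w^d + Σ_{j=0}^{d-2} (Σ_{k=0}^{d-j} a_{j,k}^{d-j} z^k) w^j`. -/
def qpoly (d : ℕ) (lam : Param d) (z w : ℂ) : ℂ :=
  w ^ d + ∑ j : Fin (d - 1),
    (∑ k : Fin (d - (j : ℕ) + 1), lam ⟨j, k⟩ ^ (d - (j : ℕ)) * z ^ (k : ℕ)) * w ^ (j : ℕ)

/-- Non-autonomous fiberwise iterates along the base `p(z) = z^d`:
`Q⁰ = id`, `Q^{n+1}_{λ,z} = q_{λ, z^{d^n}} ∘ Q^n_{λ,z}`. -/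
def Qit (d : ℕ) (lam : Param d) (z : ℂ) : ℕ → ℂ → ℂ
  | 0, w => w
  | n + 1, w => qpoly d lam (z ^ d ^ n) (Qit d lam z n w)

/-- `R_λ = Σ_{j=0}^{d-2} (Σ_{k=0}^{d-j} |a_{j,k}|^{d-j})^{1/(d-j)}` (real powers). -/
def Rlam (d : ℕ) (lam : Param d) : ℝ :=
  ∑ j : Fin (d - 1),
    (∑ k : Fin (d - (j : ℕ) + 1), ‖lam ⟨j, k⟩‖ ^ (d - (j : ℕ))) ^ (((d - (j : ℕ) : ℕ) : ℝ))⁻¹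

/-- The escape locus `𝒟`: all fiberwise critical orbits over the circle are unbounded. -/
def Dset (d : ℕ) : Set (Param d) :=
  {lam | ∀ z : ℂ, ‖z‖ = 1 → ∀ c : ℂ,
    deriv (qpoly d lam z) c = 0 →
      ¬ Bornology.IsBounded (Set.range fun n => Qit d lam z n c)}

/-- `[λ] ∉ E`: for every `z` on the unit circle, `q_{λ,z}` and `q'_{λ,z}`
have no common root. -/
def NotInE (d : ℕ) (lam : Param d) : Prop :=
  ∀ z : ℂ, ‖z‖ = 1 → ∀ c : ℂ,
    ¬(qpoly d lam z c = 0 ∧ deriv (qpoly d lam z) c = 0)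

/-- explicit derivative of `qpoly` in `w`. -/
def dq (d : ℕ) (lam : Param d) (z w : ℂ) : ℂ :=
  (d : ℂ) * w ^ (d - 1) + ∑ j : Fin (d - 1),
    (∑ k : Fin (d - (j : ℕ) + 1), lam ⟨j, k⟩ ^ (d - (j : ℕ)) * z ^ (k : ℕ)) *
      (((j : ℕ) : ℂ) * w ^ ((j : ℕ) - 1))

lemma hasDerivAt_qpoly (d : ℕ) (lam : Param d) (z w : ℂ) :
    HasDerivAt (fun w => qpoly d lam z w) (dq d lam z w) w := by
  unfold qpoly dq
  exact (hasDerivAt_pow d w).add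
    (HasDerivAt.fun_sum fun j _ => (hasDerivAt_pow (j : ℕ) w).const_mul _)

lemma deriv_qpoly (d : ℕ) (lam : Param d) (z w : ℂ) :
    deriv (qpoly d lam z) w = dq d lam z w :=
  (hasDerivAt_qpoly d lam z w).deriv

lemma qpoly_smul (d : ℕ) (lam : Param d) (t z u : ℂ) :
    qpoly d (t • lam) z (t * u) = t ^ d * qpoly d lam z u := by
  unfold qpoly
  rw [mul_add, Finset.mul_sum, mul_pow]
  congr 1
  refine Finset.sum_congr rfl fun j _ => ?_
  have hj : (j : ℕ) ≤ d := le_trans (le_of_lt j.2) (Nat.sub_le d 1)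
  have ht : t ^ (d - (j : ℕ)) * t ^ (j : ℕ) = t ^ d := pow_sub_mul_pow t hj
  have h1 : (∑ k : Fin (d - (j : ℕ) + 1), (t • lam) ⟨j, k⟩ ^ (d - (j : ℕ)) * z ^ (k : ℕ))
      = t ^ (d - (j : ℕ)) * ∑ k : Fin (d - (j : ℕ) + 1), lam ⟨j, k⟩ ^ (d - (j : ℕ)) * z ^ (k : ℕ) := by
    rw [Finset.mul_sum]
    refine Finset.sum_congr rfl fun k _ => ?_
    simp only [PiLp.smul_apply, smul_eq_mul, mul_pow]
    ring
  rw [h1, mul_pow, ← ht]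
  ring

lemma dq_smul_mul (d : ℕ) (lam : Param d) (t z u : ℂ) :
    dq d (t • lam) z (t * u) * t = t ^ d * dq d lam z u := by
  have h1 : HasDerivAt (fun w => qpoly d (t • lam) z w) (dq d (t • lam) z (t * u)) (t * u) :=
    hasDerivAt_qpoly d (t • lam) z (t * u)
  have h2 : HasDerivAt (fun u : ℂ => t * u) t u := by
    simpa using (hasDerivAt_id u).const_mul t
  have h3 : HasDerivAt (fun u => qpoly d (t • lam) z (t * u))
      (dq d (t • lam) z (t * u) * t) u := h1.comp u h2
  have h4 : (fun u => qpoly d (t • lam) z (t * u)) = fun u => t ^ d * qpoly d lam z u :=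
    funext fun u => qpoly_smul d lam t z u
  rw [h4] at h3
  exact h3.unique ((hasDerivAt_qpoly d lam z u).const_mul _)

/-- bound constant for critical points. -/
def Bconst (d : ℕ) (lam : Param d) : ℝ :=
  1 + ∑ j : Fin (d - 1), ∑ k : Fin (d - (j : ℕ) + 1), (d : ℝ) * ‖lam ⟨j, k⟩‖ ^ (d - (j : ℕ))

lemma Bconst_nonneg (d : ℕ) (lam : Param d) : 1 ≤ Bconst d lam := by
  unfold Bconst
  have : (0:ℝ) ≤ ∑ j : Fin (d - 1), ∑ k : Fin (d - (j : ℕ) + 1),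
      (d : ℝ) * ‖lam ⟨j, k⟩‖ ^ (d - (j : ℕ)) := by positivity
  linarith

set_option maxHeartbeats 1000000 in
lemma crit_bound (d : ℕ) (hd : 2 ≤ d) (lam : Param d) (z c : ℂ)
    (hz : ‖z‖ = 1) (hc : dq d lam z c = 0) : ‖c‖ ≤ Bconst d lam := by
  by_contra h
  push_neg at h
  have h1 : (1:ℝ) < ‖c‖ := lt_of_le_of_lt (Bconst_nonneg d lam) h
  have h0 : (0:ℝ) ≤ ‖c‖ := norm_nonneg c
  set T : ℝ := ∑ j : Fin (d - 1), ∑ k : Fin (d - (j : ℕ) + 1),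
      (d : ℝ) * ‖lam ⟨j, k⟩‖ ^ (d - (j : ℕ)) with hT
  have key : (d : ℝ) * ‖c‖ ^ (d - 1) ≤ T * ‖c‖ ^ (d - 2) := by
    have heq : (d : ℂ) * c ^ (d - 1) = -∑ j : Fin (d - 1),
        (∑ k : Fin (d - (j : ℕ) + 1), lam ⟨j, k⟩ ^ (d - (j : ℕ)) * z ^ (k : ℕ)) *
          (((j : ℕ) : ℂ) * c ^ ((j : ℕ) - 1)) := by
      unfold dq at hc; linear_combination hc
    have hnorm : (d : ℝ) * ‖c‖ ^ (d - 1) = ‖(d : ℂ) * c ^ (d - 1)‖ := by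
      simp [norm_mul, norm_pow]
    rw [hnorm, heq, norm_neg]
    calc ‖∑ j : Fin (d - 1),
        (∑ k : Fin (d - (j : ℕ) + 1), lam ⟨j, k⟩ ^ (d - (j : ℕ)) * z ^ (k : ℕ)) *
          (((j : ℕ) : ℂ) * c ^ ((j : ℕ) - 1))‖
        ≤ ∑ j : Fin (d - 1), ‖(∑ k : Fin (d - (j : ℕ) + 1),
            lam ⟨j, k⟩ ^ (d - (j : ℕ)) * z ^ (k : ℕ)) *
          (((j : ℕ) : ℂ) * c ^ ((j : ℕ) - 1))‖ := norm_sum_le _ _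
      _ ≤ ∑ j : Fin (d - 1), (∑ k : Fin (d - (j : ℕ) + 1),
            (d : ℝ) * ‖lam ⟨j, k⟩‖ ^ (d - (j : ℕ))) * ‖c‖ ^ (d - 2) := by
          refine Finset.sum_le_sum fun j _ => ?_
          rw [norm_mul, norm_mul, norm_pow]
          have hb1 : ‖∑ k : Fin (d - (j : ℕ) + 1), lam ⟨j, k⟩ ^ (d - (j : ℕ)) * z ^ (k : ℕ)‖
              ≤ ∑ k : Fin (d - (j : ℕ) + 1), ‖lam ⟨j, k⟩‖ ^ (d - (j : ℕ)) := by
            refine le_trans (norm_sum_le _ _) (Finset.sum_le_sum fun k _ => ?_)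
            rw [norm_mul, norm_pow, norm_pow, hz, one_pow, mul_one]
          have hb2 : ‖((j : ℕ) : ℂ)‖ ≤ (d : ℝ) := by
            rw [Complex.norm_natCast]
            exact_mod_cast le_trans (le_of_lt j.2) (Nat.sub_le d 1)
          have hb3 : ‖c‖ ^ ((j : ℕ) - 1) ≤ ‖c‖ ^ (d - 2) := by
            refine pow_le_pow_right₀ (le_of_lt h1) ?_
            omega
          calc ‖∑ k : Fin (d - (j : ℕ) + 1), lam ⟨j, k⟩ ^ (d - (j : ℕ)) * z ^ (k : ℕ)‖ *
              (‖((j : ℕ) : ℂ)‖ * ‖c‖ ^ ((j : ℕ) - 1))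
              ≤ (∑ k : Fin (d - (j : ℕ) + 1), ‖lam ⟨j, k⟩‖ ^ (d - (j : ℕ))) *
                ((d : ℝ) * ‖c‖ ^ (d - 2)) := by
                exact mul_le_mul hb1
                  (mul_le_mul hb2 hb3 (pow_nonneg (norm_nonneg c) _) (Nat.cast_nonneg d))
                  (mul_nonneg (norm_nonneg _) (pow_nonneg (norm_nonneg c) _))
                  (Finset.sum_nonneg fun k _ => pow_nonneg (norm_nonneg _) _)
            _ = (∑ k : Fin (d - (j : ℕ) + 1), (d : ℝ) * ‖lam ⟨j, k⟩‖ ^ (d - (j : ℕ))) *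
                ‖c‖ ^ (d - 2) := by rw [Finset.sum_mul, Finset.sum_mul]
                                    exact Finset.sum_congr rfl fun k _ => by ring
      _ = T * ‖c‖ ^ (d - 2) := by rw [hT, Finset.sum_mul]
  -- now derive contradiction
  have hpow : ‖c‖ ^ (d - 1) = ‖c‖ ^ (d - 2) * ‖c‖ := by
    rw [← pow_succ]
    congr 1
    omega
  have hposp : (0:ℝ) < ‖c‖ ^ (d - 2) := by positivity
  have hdc : (d : ℝ) * ‖c‖ ≤ T := by
    have := key
    rw [hpow] at this
    nlinarith
  have hcd : ‖c‖ ≤ (d : ℝ) * ‖c‖ := by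
    nlinarith [Nat.one_le_cast (α := ℝ) |>.mpr (le_trans one_le_two hd)]
  have : Bconst d lam = 1 + T := rfl
  nlinarith

lemma continuous_dq2 (d : ℕ) (lam : Param d) :
    Continuous (fun p : ℂ × ℂ => dq d lam p.1 p.2) := by
  unfold dq
  exact (continuous_const.mul (continuous_snd.pow _)).add
    (continuous_finset_sum _ fun j _ =>
      ((continuous_finset_sum _ fun k _ => continuous_const.mul (continuous_fst.pow _)).mul
        (continuous_const.mul (continuous_snd.pow _))))

lemma continuous_q2 (d : ℕ) (lam : Param d) :
    Continuous (fun p : ℂ × ℂ => ‖qpoly d lam p.1 p.2‖) := by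
  have : Continuous (fun p : ℂ × ℂ => qpoly d lam p.1 p.2) := by
    unfold qpoly
    exact (continuous_snd.pow _).add
      (continuous_finset_sum _ fun j _ =>
        ((continuous_finset_sum _ fun k _ => continuous_const.mul (continuous_fst.pow _)).mul
          (continuous_snd.pow _)))
  exact continuous_norm.comp this

/-- zero parameter case -/
lemma dq_zero (d : ℕ) (hd : 2 ≤ d) (lam : Param d) (z c : ℂ) :
    dq d ((0 : ℂ) • lam) z c = (d : ℂ) * c ^ (d - 1) := by
  unfold dq
  have : ∀ j : Fin (d - 1), ∀ k : Fin (d - (j : ℕ) + 1),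
      ((0 : ℂ) • lam) ⟨j, k⟩ ^ (d - (j : ℕ)) = 0 := by
    intro j k
    have : d - (j : ℕ) ≠ 0 := by have := j.2; omega
    simp [this]
  simp only [this, zero_mul, Finset.sum_const_zero, add_zero]


/-- uniform two-sided estimate `|q_{tλ₀,z}(c)| ≍ |t|^d` on critical values. -/
theorem critical_value_estimate (d : ℕ) (hd : 2 ≤ d) (lam₀ : Param d)
    (hE : NotInE d lam₀) :
    ∃ C : ℝ, 0 < C ∧
      ∀ t : ℂ, ∀ z : ℂ, ‖z‖ = 1 → ∀ c : ℂ,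
        deriv (qpoly d (t • lam₀) z) c = 0 →
          (1 / C) * ‖t‖ ^ d ≤ ‖qpoly d (t • lam₀) z c‖ ∧
          ‖qpoly d (t • lam₀) z c‖ ≤ C * ‖t‖ ^ d := by
  classical
  set B := Bconst d lam₀ with hB
  set K : Set (ℂ × ℂ) :=
    (Metric.sphere (0 : ℂ) 1 ×ˢ Metric.closedBall (0 : ℂ) B) ∩
      {p : ℂ × ℂ | dq d lam₀ p.1 p.2 = 0} with hKdef
  have hKcompact : IsCompact K :=
    ((isCompact_sphere (0 : ℂ) 1).prod (isCompact_closedBall (0 : ℂ) B)).inter_right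
      (isClosed_eq (continuous_dq2 d lam₀) continuous_const)
  -- membership lemma
  have hmem : ∀ z u : ℂ, ‖z‖ = 1 → dq d lam₀ z u = 0 → (z, u) ∈ K := by
    intro z u hz hdq
    refine ⟨⟨?_, ?_⟩, hdq⟩
    · simpa using mem_sphere_zero_iff_norm.mpr hz
    · exact Metric.mem_closedBall.mpr (by simpa [Complex.dist_eq] using crit_bound d hd lam₀ z u hz hdq)
  -- the zero-`t` case, shared
  have hzero : ∀ z c : ℂ, ‖z‖ = 1 →
      deriv (qpoly d ((0:ℂ) • lam₀) z) c = 0 → qpoly d ((0:ℂ) • lam₀) z c = 0 := by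
    intro z c hz hdc
    rw [deriv_qpoly, dq_zero d hd] at hdc
    have hd0 : (d : ℂ) ≠ 0 := Nat.cast_ne_zero.mpr (by omega)
    have hc0 : c = 0 := by
      have := (mul_eq_zero.mp hdc).resolve_left hd0
      exact pow_eq_zero_iff (by omega) |>.mp this
    have := qpoly_smul d lam₀ 0 z 0
    rw [mul_zero] at this
    rw [hc0, this, zero_pow (by omega : d ≠ 0), zero_mul]
  by_cases hKne : K.Nonempty
  · obtain ⟨pm, hpmK, hpmin⟩ :=
      hKcompact.exists_isMinOn hKne ((continuous_q2 d lam₀).continuousOn)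
    obtain ⟨pM, hpMK, hpmax⟩ :=
      hKcompact.exists_isMaxOn hKne ((continuous_q2 d lam₀).continuousOn)
    set m := ‖qpoly d lam₀ pm.1 pm.2‖ with hm
    set M := ‖qpoly d lam₀ pM.1 pM.2‖ with hM
    have hmpos : 0 < m := by
      rcases hpmK with ⟨⟨hs, _⟩, hdq⟩
      have hz1 : ‖pm.1‖ = 1 := by
        simpa using mem_sphere_zero_iff_norm.mp hs
      have hq : qpoly d lam₀ pm.1 pm.2 ≠ 0 := by
        intro h0
        exact hE pm.1 hz1 pm.2 ⟨h0, by rw [deriv_qpoly]; exact hdq⟩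
      exact norm_pos_iff.mpr hq
    refine ⟨max (1 / m) M, lt_of_lt_of_le (by positivity) (le_max_left _ _), ?_⟩
    intro t z hz c hdc
    by_cases ht : t = 0
    · subst ht
      rw [hzero z c hz hdc]
      simp [zero_pow (show d ≠ 0 by omega)]
    · -- rescale
      set u := t⁻¹ * c with hu
      have hcu : c = t * u := by rw [hu, ← mul_assoc, mul_inv_cancel₀ ht, one_mul]
      have hdqu : dq d lam₀ z u = 0 := by
        have h1 := dq_smul_mul d lam₀ t z u
        rw [← hcu] at h1
        rw [deriv_qpoly] at hdc
        rw [hdc, zero_mul] at h1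
        have htd : (t : ℂ) ^ d ≠ 0 := pow_ne_zero _ ht
        exact (mul_eq_zero.mp h1.symm).resolve_left htd
      have hKmem : (z, u) ∈ K := hmem z u hz hdqu
      have hlow : m ≤ ‖qpoly d lam₀ z u‖ := isMinOn_iff.mp hpmin (z, u) hKmem
      have hhigh : ‖qpoly d lam₀ z u‖ ≤ M := isMaxOn_iff.mp hpmax (z, u) hKmem
      have hval : ‖qpoly d (t • lam₀) z c‖
          = ‖t‖ ^ d * ‖qpoly d lam₀ z u‖ := by
        rw [hcu, qpoly_smul, norm_mul, norm_pow]
      constructor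
      · rw [hval]
        have h1C : 1 / max (1 / m) M ≤ m := by
          have : 1 / m ≤ max (1 / m) M := le_max_left _ _
          calc 1 / max (1 / m) M ≤ 1 / (1 / m) :=
                one_div_le_one_div_of_le (by positivity) this
            _ = m := one_div_one_div m
        calc (1 / max (1 / m) M) * ‖t‖ ^ d ≤ m * ‖t‖ ^ d := by
              apply mul_le_mul_of_nonneg_right h1C (by positivity)
          _ ≤ ‖t‖ ^ d * ‖qpoly d lam₀ z u‖ := by
              rw [mul_comm]
              exact mul_le_mul_of_nonneg_left hlow (by positivity)
      · rw [hval]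
        calc ‖t‖ ^ d * ‖qpoly d lam₀ z u‖
            ≤ ‖t‖ ^ d * M :=
              mul_le_mul_of_nonneg_left hhigh (by positivity)
          _ ≤ max (1 / m) M * ‖t‖ ^ d := by
              rw [mul_comm]
              exact mul_le_mul_of_nonneg_right (le_max_right _ _) (by positivity)
  · refine ⟨1, one_pos, ?_⟩
    intro t z hz c hdc
    by_cases ht : t = 0
    · subst ht
      rw [hzero z c hz hdc]
      simp [zero_pow (show d ≠ 0 by omega)]
    · exfalso
      set u := t⁻¹ * c with hu
      have hcu : c = t * u := by rw [hu, ← mul_assoc, mul_inv_cancel₀ ht, one_mul]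
      have hdqu : dq d lam₀ z u = 0 := by
        have h1 := dq_smul_mul d lam₀ t z u
        rw [← hcu] at h1
        rw [deriv_qpoly] at hdc
        rw [hdc, zero_mul] at h1
        have htd : (t : ℂ) ^ d ≠ 0 := pow_ne_zero _ ht
        exact (mul_eq_zero.mp h1.symm).resolve_left htd
      exact hKne ⟨(z, u), hmem z u hz hdqu⟩
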